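/- Let $\mathbb{W}$ be a random field indexed by $\mathcal{B}_0(\mathbb{R}^d)$ whose finite dimensional generating functions are $\tfrac12\hat{\mathbb{E}}[\langle Q\mathbb{W}_{\underline{\gamma}},\mathbb{W}_{\underline{\gamma}}\rangle]=G(\sum_{i,j}q_{ij}\lambda(A_i\cap A_j))$. If $A_1,A_2\in\mathcal{B}_0(\mathbb{R}^d)$ are disjoint and $A_3=A_1\cup A_2$, then $\hat{\mathbb{E}}[(\mathbb{W}_{A_1}+\mathbb{W}_{A_2}-\mathbb{W}_{A_3})^2]=0$, i.e. $\mathbb{W}$ is finitely additive quasi-surely. -/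

import Mathlib

open MeasureTheory

structure SublinearExp (Ω : Type) where
  E : (Ω → ℝ) → ℝ
  mono : ∀ X Y : Ω → ℝ, (∀ ω, X ω ≤ Y ω) → E X ≤ E Y
  const : ∀ c : ℝ, E (fun _ => c) = c
  subadd : ∀ X Y : Ω → ℝ, E (fun ω => X ω + Y ω) ≤ E X + E Y
  poshom : ∀ (l : ℝ) (X : Ω → ℝ), 0 ≤ l → E (fun ω => l * X ω) = l * E X

/-- `G(a) = ½ σ̄² a⁺ − ½ σ̲² a⁻`. -/
noncomputable def Gscal (sl su a : ℝ) : ℝ := (1 / 2) * su * max a 0 - (1 / 2) * sl * max (-a) 0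

/-!
The matrix `Q` of the statement is `v vᵀ` with `v = (1, 1, -1)`. Hence the quadratic form
`∑ q_ij 𝕎_{A_i} 𝕎_{A_j}` is the square `(𝕎_{A₁} + 𝕎_{A₂} - 𝕎_{A₃})²`, while
`∑ q_ij λ(A_i ∩ A_j)` vanishes by additivity of `λ`. The generating-function identity then gives
`½ Ê[(𝕎_{A₁} + 𝕎_{A₂} - 𝕎_{A₃})²] = G(0) = 0`.
-/

lemma Gscal_zero (sl su : ℝ) : Gscal sl su 0 = 0 := by
  simp [Gscal]

lemma Matrix.isSymm_vecMulVec_self {α ι : Type*} [CommMagma α] (v : ι → α) :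
    (Matrix.vecMulVec v v).IsSymm :=
  Matrix.transpose_vecMulVec v v

lemma sum_sum_vecMulVec_self_mul {R ι : Type*} [CommRing R] [Fintype ι] (v x : ι → R) :
    ∑ i, ∑ j, Matrix.vecMulVec v v i j * x i * x j = (∑ i, v i * x i) ^ 2 := by
  simp only [Matrix.vecMulVec_apply, sq, Finset.sum_mul_sum]
  exact Finset.sum_congr rfl fun i _ => Finset.sum_congr rfl fun j _ => by ring

lemma sum_sum_vecMulVec_measureReal_inter_union_eq_zero {α : Type*} [MeasurableSpace α]
    (μ : Measure α) {A₁ A₂ : Set α} (h₂ : MeasurableSet A₂) (h₁f : μ A₁ ≠ ⊤) (h₂f : μ A₂ ≠ ⊤)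
    (hdisj : Disjoint A₁ A₂) :
    ∑ i, ∑ j, Matrix.vecMulVec ![(1 : ℝ), 1, -1] ![1, 1, -1] i j
      * μ.real (![A₁, A₂, A₁ ∪ A₂] i ∩ ![A₁, A₂, A₁ ∪ A₂] j) = 0 := by
  have h₁₂ : μ.real (A₁ ∩ A₂) = 0 := by
    rw [hdisj.inter_eq, measureReal_empty]
  have h₃ : μ.real (A₁ ∪ A₂) = μ.real A₁ + μ.real A₂ := measureReal_union hdisj h₂ h₁f h₂f
  simp only [Fin.sum_univ_three, Matrix.vecMulVec_apply, Matrix.cons_val_zero,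
    Matrix.cons_val_one, Matrix.cons_val_two, Matrix.head_cons, Matrix.tail_cons,
    Set.inter_self, Set.inter_comm A₂ A₁, h₁₂, Set.inter_eq_left.mpr Set.subset_union_left,
    Set.inter_eq_left.mpr Set.subset_union_right, Set.union_inter_cancel_left,
    Set.union_inter_cancel_right, h₃]
  ring

theorem stmt_11_general {Ω : Type} (S : SublinearExp Ω) (d : ℕ) (sl su : ℝ)
    (W : Set (Fin d → ℝ) → Ω → ℝ)
    -- the finite dimensional generating functions of the random field `W`
    (hgen : ∀ (n : ℕ) (A : Fin n → Set (Fin d → ℝ)),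
      (∀ i, MeasurableSet (A i)) → (∀ i, volume (A i) < ⊤) →
      ∀ Q : Matrix (Fin n) (Fin n) ℝ, Q.IsSymm →
      (1 / 2) * S.E (fun ω => ∑ i, ∑ j, Q i j * W (A i) ω * W (A j) ω)
        = Gscal sl su (∑ i, ∑ j, Q i j * (volume (A i ∩ A j)).toReal))
    (A₁ A₂ : Set (Fin d → ℝ)) (h1 : MeasurableSet A₁) (h2 : MeasurableSet A₂)
    (h1f : volume A₁ < ⊤) (h2f : volume A₂ < ⊤) (hdisj : Disjoint A₁ A₂) :
    S.E (fun ω => (W A₁ ω + W A₂ ω - W (A₁ ∪ A₂) ω) ^ 2) = 0 := by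
  have hmeas : ∀ i, MeasurableSet (![A₁, A₂, A₁ ∪ A₂] i) := by
    simp [Fin.forall_fin_succ, h1, h2, h1.union h2]
  have hfin : ∀ i, volume (![A₁, A₂, A₁ ∪ A₂] i) < ⊤ := by
    simp [Fin.forall_fin_succ, measure_union_lt_top_iff, h1f, h2f]
  have key := hgen 3 _ hmeas hfin _ (Matrix.isSymm_vecMulVec_self ![1, 1, -1])
  have hsquare : (fun ω => ∑ i, ∑ j, Matrix.vecMulVec ![(1 : ℝ), 1, -1] ![1, 1, -1] i j
      * W (![A₁, A₂, A₁ ∪ A₂] i) ω * W (![A₁, A₂, A₁ ∪ A₂] j) ω)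
      = fun ω => (W A₁ ω + W A₂ ω - W (A₁ ∪ A₂) ω) ^ 2 := by
    funext ω
    rw [sum_sum_vecMulVec_self_mul ![1, 1, -1] fun i => W (![A₁, A₂, A₁ ∪ A₂] i) ω]
    simp [Fin.sum_univ_three, sub_eq_add_neg]
  simp only [← measureReal_def] at key
  rw [hsquare, sum_sum_vecMulVec_measureReal_inter_union_eq_zero volume h2 h1f.ne h2f.ne hdisj,
    Gscal_zero] at key
  linarith

/-- For disjoint `A₁, A₂` of finite measure and `A₃ = A₁ ∪ A₂`,
`Ê[(𝕎_{A₁} + 𝕎_{A₂} - 𝕎_{A₃})²] = 0`, i.e. `𝕎` is finitely additive quasi-surely. -/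
theorem stmt_11 {Ω : Type} (S : SublinearExp Ω) (d : ℕ) (sl su : ℝ)
    (hsl : 0 ≤ sl) (hsu : sl ≤ su)
    (W : Set (Fin d → ℝ) → Ω → ℝ)
    -- the finite dimensional generating functions of the random field `W`
    (hgen : ∀ (n : ℕ) (A : Fin n → Set (Fin d → ℝ)),
      (∀ i, MeasurableSet (A i)) → (∀ i, volume (A i) < ⊤) →
      ∀ Q : Matrix (Fin n) (Fin n) ℝ, Q.IsSymm →
      (1 / 2) * S.E (fun ω => ∑ i, ∑ j, Q i j * W (A i) ω * W (A j) ω)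
        = Gscal sl su (∑ i, ∑ j, Q i j * (volume (A i ∩ A j)).toReal))
    (A₁ A₂ : Set (Fin d → ℝ)) (h1 : MeasurableSet A₁) (h2 : MeasurableSet A₂)
    (h1f : volume A₁ < ⊤) (h2f : volume A₂ < ⊤) (hdisj : Disjoint A₁ A₂) :
    S.E (fun ω => (W A₁ ω + W A₂ ω - W (A₁ ∪ A₂) ω) ^ 2) = 0 :=
  stmt_11_general S d sl su W hgen A₁ A₂ h1 h2 h1f h2f hdisj
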